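/- Let R be a commutative ring with unity and J ⊊ R an ideal contained in only finitely many maximal ideals of R. Then J satisfies the unital set condition: for every integer k ≥ 2 and every a_1,…,a_k ∈ R with (a_1)+⋯+(a_k) = R, there exists a in the ideal (a_2,…,a_k) such that a_1 + a is a unit modulo J. -/

import Mathlib

/-!
Let `S` be the finitely many maximal ideals over `J`; an element is a unit modulo `J` exactly
when it avoids every ideal in `S`. Given `(a₁) + I = R` with `I = (a₂, …, aₖ)`, no `M ∈ S`
containing `a₁` contains `I`, nor the intersection of the `M ∈ S` not containing `a₁` (they are
maximal, hence incomparable with `M`). So by prime avoidance there is `b` in `I` and in every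
`M ∈ S` with `a₁ ∉ M`, but in no `M ∈ S` with `a₁ ∈ M`; then `a₁ + b` avoids all of `S`.
-/

namespace Ideal

variable {R : Type*} [CommRing R]

theorem isUnit_quotient_mk_of_forall_notMem {J : Ideal R} {x : R}
    (hx : ∀ M : Ideal R, M.IsMaximal → J ≤ M → x ∉ M) : IsUnit (Quotient.mk J x) := by
  by_contra hunit
  obtain ⟨m, hm, hxm⟩ := exists_max_ideal_of_mem_nonunits hunit
  exact hx (m.comap (Quotient.mk J)) (comap_isMaximal_of_surjective _ Quotient.mk_surjective)
    (fun j hj ↦ by simp [mem_comap, Quotient.eq_zero_iff_mem.mpr hj]) hxm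

theorem exists_add_mem_forall_notMem {S : Finset (Ideal R)} (hS : ∀ M ∈ S, M.IsMaximal)
    {a : R} {I : Ideal R} (h : span {a} ⊔ I = ⊤) : ∃ b ∈ I, ∀ M ∈ S, a + b ∉ M := by
  classical
  set K := I ⊓ (S.filter (a ∉ ·)).inf id
  have hK : ∀ M ∈ S.filter (a ∈ ·), ¬K ≤ M := by
    intro M hM hKM
    obtain ⟨hMS, haM⟩ := Finset.mem_filter.mp hM
    rcases (hS M hMS).isPrime.inf_le.mp hKM with hIM | hinf
    · exact (hS M hMS).ne_top
        (top_unique (h ▸ sup_le ((span_singleton_le_iff_mem _).mpr haM) hIM))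
    · obtain ⟨N, hN, hNM⟩ := (hS M hMS).isPrime.inf_le'.mp hinf
      obtain ⟨hNS, haN⟩ := Finset.mem_filter.mp hN
      exact haN ((hS N hNS).eq_of_le (hS M hMS).ne_top hNM ▸ haM)
  have havoid : ¬(K : Set R) ⊆ ⋃ M ∈ (S.filter (a ∈ ·) : Set (Ideal R)), (M : Set R) := by
    rw [subset_union_prime ⊥ ⊥ fun M hM _ _ ↦ (hS M (Finset.mem_filter.mp hM).1).isPrime]
    exact fun ⟨M, hM, hKM⟩ ↦ hK M hM hKM
  obtain ⟨b, ⟨hbI, hbinf⟩, hb⟩ := Set.not_subset.mp havoid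
  refine ⟨b, hbI, fun M hMS habM ↦ ?_⟩
  by_cases haM : a ∈ M
  · refine hb (Set.mem_biUnion (Finset.mem_filter.mpr ⟨hMS, haM⟩) ?_)
    simpa using M.sub_mem habM haM
  · have hbM : b ∈ M :=
      Finset.inf_le (f := id) (Finset.mem_filter.mpr ⟨hMS, haM⟩ : M ∈ S.filter (a ∉ ·)) hbinf
    exact haM (by simpa using M.sub_mem habM hbM)

theorem span_singleton_sup_span_image_compl {ι : Type*} (a : ι → R) (i₀ : ι) :
    span {a i₀} ⊔ span (a '' {i₀}ᶜ) = span (Set.range a) := by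
  rw [← span_union, ← Set.image_singleton, ← Set.image_union, Set.union_compl_self,
    Set.image_univ]

end Ideal

open Ideal in
theorem usc_of_finitely_many_maximal {R : Type*} [CommRing R] (J : Ideal R)
    (hfin : {M : Ideal R | M.IsMaximal ∧ J ≤ M}.Finite) :
    ∀ k : ℕ, ∀ _ : 2 ≤ k, ∀ a : Fin k → R, (∑ i, Ideal.span {a i} = ⊤) →
      ∃ b ∈ Ideal.span (a '' {i | (i : ℕ) ≠ 0}),
        IsUnit (Ideal.Quotient.mk J (a ⟨0, by omega⟩ + b)) := by
  intro k hk a hsum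
  have hcop : span {a ⟨0, by omega⟩} ⊔ span (a '' {i | (i : ℕ) ≠ 0}) = ⊤ := by
    have hcompl : {i : Fin k | (i : ℕ) ≠ 0} = {⟨0, by omega⟩}ᶜ := by
      ext i
      simp [Fin.ext_iff]
    rw [hcompl, span_singleton_sup_span_image_compl, span_range_eq_iSup, ← hsum, sum_eq_sup,
      Finset.sup_univ_eq_iSup]
  obtain ⟨b, hbI, hb⟩ :=
    exists_add_mem_forall_notMem (S := hfin.toFinset) (fun M hM ↦ (hfin.mem_toFinset.mp hM).1) hcop
  exact ⟨b, hbI, isUnit_quotient_mk_of_forall_notMem fun M hM hJM ↦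
    hb M (hfin.mem_toFinset.mpr ⟨hM, hJM⟩)⟩
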